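/- arXiv:1003.2022 — 3 statements merged into one kernel-verified Lean document; each statement's English description precedes it below -/
import Mathlib

section
/- Let a_k(N) = σ√(24/N) for all k and θ_k = (k-1)π/N. Then for every fixed ω ∈ ℝ², the product ∏_{k=1}^N sinc((a_k(N)/2) u_{θ_k}ᵀ ω) converges to exp(−σ²‖ω‖²/2) as N → ∞. -/
/-!
The arguments `x_k = σ √(24/N) / 2 · (cos θ_k ω₁ + sin θ_k ω₂)` are uniformly `O(N^{-1/2})`, and
because the double-angle sums `∑ cos 2θ_k`, `∑ sin 2θ_k` vanish (they are sums of `N`-th roots of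
unity), `∑ x_k² = 3σ²‖ω‖²` exactly. Since `log (sinc x) = -x²/6 + O(x⁴)`, the logarithm of the
product is `-σ²‖ω‖²/2 + O(max_k x_k²)`.
-/

open Real Filter Finset Topology

noncomputable def sinc (x : ℝ) : ℝ := if x = 0 then 1 else Real.sin x / x

namespace Real

variable {x : ℝ}

theorem abs_sinc_sub_taylor_le (hx : |x| ≤ 1) : |sinc x - (1 - x ^ 2 / 6)| ≤ x ^ 4 / 100 := by
  rcases eq_or_ne x 0 with rfl | hx0
  · simp
  have hpos : 0 < |x| := abs_pos.mpr hx0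
  have hdiv : sinc x - (1 - x ^ 2 / 6) = (sin x - (x - x ^ 3 / 6)) / x := by
    rw [sinc_of_ne_zero hx0]
    field_simp
  rw [hdiv, abs_div, div_le_iff₀ hpos]
  calc |sin x - (x - x ^ 3 / 6)| ≤ |x| ^ 5 / 100 := sin_bound hx
    _ = x ^ 4 / 100 * |x| := by rw [← Even.pow_abs ⟨2, rfl⟩ x]; ring

theorem abs_sinc_sub_one_le (hx : |x| ≤ 1) : |sinc x - 1| ≤ x ^ 2 / 5 := by
  have htaylor := abs_sinc_sub_taylor_le hx
  have hx2 : x ^ 2 ≤ 1 := (sq_le_one_iff_abs_le_one x).mpr hx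
  have hx4 : x ^ 4 ≤ x ^ 2 := by nlinarith [sq_nonneg x]
  rw [abs_le] at htaylor ⊢
  constructor <;> linarith [sq_nonneg x]

theorem sinc_pos (hx : |x| ≤ 1) : 0 < sinc x := by
  have h := abs_le.mp (abs_sinc_sub_one_le hx)
  have hx2 : x ^ 2 ≤ 1 := (sq_le_one_iff_abs_le_one x).mpr hx
  linarith [h.1]

/-- `log y` lies between `1 - 1/y` and `y - 1`, which differ by `(y - 1)² / y`. -/
theorem abs_log_sub_sub_one_le {y : ℝ} (hy : 1 / 2 ≤ y) : |log y - (y - 1)| ≤ 2 * (y - 1) ^ 2 := by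
  have hy0 : 0 < y := by linarith
  have hupper := log_le_sub_one_of_pos hy0
  have hlower := one_sub_inv_le_log_of_pos hy0
  have hgap : (y - 1) - (1 - y⁻¹) ≤ 2 * (y - 1) ^ 2 := by
    have : (y - 1) - (1 - y⁻¹) = (y - 1) ^ 2 / y := by field_simp
    rw [this, div_le_iff₀ hy0]
    nlinarith [sq_nonneg (y - 1)]
  rw [abs_sub_comm, abs_of_nonneg (by linarith)]
  linarith

theorem abs_log_sinc_add_sq_div_six_le (hx : |x| ≤ 1) :
    |log (sinc x) + x ^ 2 / 6| ≤ x ^ 4 := by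
  have htaylor := abs_sinc_sub_taylor_le hx
  have hone := abs_sinc_sub_one_le hx
  have hx2 : x ^ 2 ≤ 1 := (sq_le_one_iff_abs_le_one x).mpr hx
  have hhalf : 1 / 2 ≤ sinc x := by linarith [(abs_le.mp hone).1]
  have hsq : (sinc x - 1) ^ 2 ≤ (x ^ 2 / 5) ^ 2 := by
    rw [← sq_abs]; exact pow_le_pow_left₀ (abs_nonneg _) hone 2
  calc |log (sinc x) + x ^ 2 / 6|
      = |(log (sinc x) - (sinc x - 1)) + (sinc x - (1 - x ^ 2 / 6))| := by ring_nf
    _ ≤ |log (sinc x) - (sinc x - 1)| + |sinc x - (1 - x ^ 2 / 6)| := abs_add_le _ _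
    _ ≤ 2 * (sinc x - 1) ^ 2 + x ^ 4 / 100 := add_le_add (abs_log_sub_sub_one_le hhalf) htaylor
    _ ≤ x ^ 4 := by nlinarith [sq_nonneg (x ^ 2)]

theorem abs_sum_log_sinc_add_le {κ : Type*} {s : Finset κ} {x : κ → ℝ} {c : ℝ} (hc : c ≤ 1)
    (hxc : ∀ k ∈ s, |x k| ≤ c) :
    |∑ k ∈ s, log (sinc (x k)) + (∑ k ∈ s, x k ^ 2) / 6| ≤ c ^ 2 * ∑ k ∈ s, x k ^ 2 := by
  rw [Finset.sum_div, ← Finset.sum_add_distrib, Finset.mul_sum]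
  refine (Finset.abs_sum_le_sum_abs _ _).trans (Finset.sum_le_sum fun k hk => ?_)
  have hxk : x k ^ 2 ≤ c ^ 2 := sq_le_sq' (abs_le.mp (hxc k hk)).1 (abs_le.mp (hxc k hk)).2
  calc |log (sinc (x k)) + x k ^ 2 / 6| ≤ x k ^ 4 :=
        abs_log_sinc_add_sq_div_six_le ((hxc k hk).trans hc)
    _ = x k ^ 2 * x k ^ 2 := by ring
    _ ≤ c ^ 2 * x k ^ 2 := mul_le_mul_of_nonneg_right hxk (sq_nonneg _)

theorem tendsto_prod_sinc {ι κ : Type*} {l : Filter ι} {s : ι → Finset κ} {x : ι → κ → ℝ}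
    {c : ι → ℝ} {M : ℝ} (hc : Tendsto c l (𝓝 0)) (hxc : ∀ i, ∀ k ∈ s i, |x i k| ≤ c i)
    (hM : ∀ᶠ i in l, ∑ k ∈ s i, x i k ^ 2 = M) :
    Tendsto (fun i => ∏ k ∈ s i, sinc (x i k)) l (𝓝 (exp (-(M / 6)))) := by
  have hc1 : ∀ᶠ i in l, c i ≤ 1 := hc.eventually (eventually_le_nhds one_pos)
  have hlog : Tendsto (fun i => ∑ k ∈ s i, log (sinc (x i k))) l (𝓝 (-(M / 6))) := by
    rw [← tendsto_sub_nhds_zero_iff, tendsto_zero_iff_abs_tendsto_zero]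
    refine squeeze_zero' (Eventually.of_forall fun _ => abs_nonneg _) ?_
      (by simpa using (hc.pow 2).mul_const M)
    filter_upwards [hc1, hM] with i hci hMi
    simpa [hMi] using abs_sum_log_sinc_add_le hci (hxc i)
  refine ((continuous_exp.tendsto _).comp hlog).congr' ?_
  filter_upwards [hc1] with i hci
  rw [Function.comp_apply, exp_sum]
  exact Finset.prod_congr rfl fun k hk => exp_log (sinc_pos ((hxc i k hk).trans hci))

end Real

theorem sum_exp_two_mul_angle_mul_I {N : ℕ} (hN : 1 < N) :
    ∑ k ∈ range N, Complex.exp (↑(2 * (k * π / N)) * Complex.I) = 0 := by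
  have hζ := Complex.isPrimitiveRoot_exp N (by omega)
  rw [← hζ.geom_sum_eq_zero hN]
  refine Finset.sum_congr rfl fun k _ => ?_
  rw [← Complex.exp_nat_mul]
  congr 1
  push_cast
  ring

theorem sum_cos_two_mul_angle {N : ℕ} (hN : 1 < N) :
    ∑ k ∈ range N, cos (2 * (k * π / N)) = 0 := by
  have h := congrArg Complex.re (sum_exp_two_mul_angle_mul_I hN)
  simpa only [Complex.re_sum, Complex.exp_ofReal_mul_I_re, Complex.zero_re] using h

theorem sum_sin_two_mul_angle {N : ℕ} (hN : 1 < N) :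
    ∑ k ∈ range N, sin (2 * (k * π / N)) = 0 := by
  have h := congrArg Complex.im (sum_exp_two_mul_angle_mul_I hN)
  simpa only [Complex.im_sum, Complex.exp_ofReal_mul_I_im, Complex.zero_im] using h

theorem sum_sq_cos_mul_add_sin_mul {N : ℕ} (hN : 1 < N) (a b : ℝ) :
    ∑ k ∈ range N, (cos (k * π / N) * a + sin (k * π / N) * b) ^ 2 = N / 2 * (a ^ 2 + b ^ 2) := by
  have hterm (θ : ℝ) : (cos θ * a + sin θ * b) ^ 2
      = (a ^ 2 + b ^ 2) / 2 + (a ^ 2 - b ^ 2) / 2 * cos (2 * θ) + a * b * sin (2 * θ) := by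
    rw [cos_two_mul, sin_two_mul]
    linear_combination b ^ 2 * sin_sq_add_cos_sq θ
  simp only [hterm, sum_add_distrib, ← mul_sum, sum_cos_two_mul_angle hN,
    sum_sin_two_mul_angle hN, sum_const, card_range, nsmul_eq_mul]
  ring

theorem abs_cos_mul_add_sin_mul_le (θ a b : ℝ) : |cos θ * a + sin θ * b| ≤ |a| + |b| := by
  calc |cos θ * a + sin θ * b| ≤ |cos θ| * |a| + |sin θ| * |b| := by
        simpa only [abs_mul] using abs_add_le (cos θ * a) (sin θ * b)
    _ ≤ 1 * |a| + 1 * |b| := by gcongr <;> [exact abs_cos_le_one θ; exact abs_sin_le_one θ]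
    _ = |a| + |b| := by ring

theorem boxspline_fourier_tendsto_gaussian_general (σ : ℝ) (ω : ℝ × ℝ) :
    Tendsto (fun N : ℕ => ∏ k ∈ Finset.range N,
        _root_.sinc (σ * Real.sqrt (24 / N) / 2 *
          (Real.cos (k * π / N) * ω.1 + Real.sin (k * π / N) * ω.2)))
      atTop (nhds (Real.exp (-σ^2 * (ω.1^2 + ω.2^2) / 2))) := by
  have hsum : ∀ᶠ N : ℕ in atTop, ∑ k ∈ range N, (σ * √(24 / N) / 2 *
      (cos (k * π / N) * ω.1 + sin (k * π / N) * ω.2)) ^ 2 = 3 * σ ^ 2 * (ω.1 ^ 2 + ω.2 ^ 2) := by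
    filter_upwards [eventually_gt_atTop 1] with N hN
    have hN0 : (N : ℝ) ≠ 0 := by positivity
    simp only [mul_pow, ← mul_sum, sum_sq_cos_mul_add_sin_mul hN, div_pow,
      sq_sqrt (by positivity : (0 : ℝ) ≤ 24 / N)]
    field_simp
    ring
  have hscale : Tendsto (fun N : ℕ => |σ| * √(24 / N) / 2 * (|ω.1| + |ω.2|)) atTop (𝓝 0) := by
    have h := (tendsto_const_div_atTop_nhds_zero_nat (24 : ℝ)).sqrt
    simpa using ((h.const_mul |σ|).div_const 2).mul_const (|ω.1| + |ω.2|)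
  have hbound (N k : ℕ) : |σ * √(24 / N) / 2 * (cos (k * π / N) * ω.1 + sin (k * π / N) * ω.2)|
      ≤ |σ| * √(24 / N) / 2 * (|ω.1| + |ω.2|) := by
    rw [abs_mul, abs_div, abs_mul, abs_of_nonneg (sqrt_nonneg _), abs_two]
    gcongr
    exact abs_cos_mul_add_sin_mul_le _ _ _
  rw [show _root_.sinc = Real.sinc from rfl,
    show -σ ^ 2 * (ω.1 ^ 2 + ω.2 ^ 2) / 2 = -(3 * σ ^ 2 * (ω.1 ^ 2 + ω.2 ^ 2) / 6) by ring]
  exact Real.tendsto_prod_sinc hscale (fun N k _ => hbound N k) hsum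

/-- With `a_k(N) = σ√(24/N)` and `θ_k = kπ/N`, for every `ω ∈ ℝ²` the product
`∏_{k<N} sinc((a_k(N)/2) u_{θ_k}ᵀω)` converges to `exp(−σ²‖ω‖²/2)` as `N → ∞`. -/
theorem boxspline_fourier_tendsto_gaussian (σ : ℝ) (hσ : 0 < σ) (ω : ℝ × ℝ) :
    Tendsto (fun N : ℕ => ∏ k ∈ Finset.range N,
        _root_.sinc (σ * Real.sqrt (24 / N) / 2 *
          (Real.cos (k * π / N) * ω.1 + Real.sin (k * π / N) * ω.2)))
      atTop (nhds (Real.exp (-σ^2 * (ω.1^2 + ω.2^2) / 2))) :=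
  boxspline_fourier_tendsto_gaussian_general σ ω
end

section
/- (Bound on elongation of the four-directional box spline.) Let a = (a₁,a₂,a₃,a₄) with all a_k > 0 and a₂ ≠ a₄ or a₁ ≠ a₃, let D = (a₃²−a₁²)² + (a₂²−a₄²)², γ = (∑a_k²)/√D and ϱ_a = 1 + 2/(γ−1). Suppose the orientation is θ_a = φ ∈ (0,π), φ ∉ {0, π/4, π/2, 3π/4}, i.e. (a₁² − a₃²) = ν_φ (a₄² − a₂²) where ν_φ = (1/2)(tan φ − cot φ)·sign(π/2 − φ). Then γ > (1 + |ν_φ|)/√(1 + ν_φ²), and consequently ϱ_a < (1 + |ν_φ| + √(1+ν_φ²))/(1 + |ν_φ| − √(1+ν_φ²)). -/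
open Real

set_option maxHeartbeats 1000000 in
/-- Bound on the elongation of the four-directional box spline. If the box spline with
positive scales `a₁,…,a₄` is oriented along `φ ∈ (0,π)`, `φ ∉ {π/4, π/2, 3π/4}`, i.e.
`a₁² − a₃² = ν_φ (a₄² − a₂²)` with `ν_φ = (1/2)(tan φ − cot φ)·sign(π/2 − φ)`, then
`γ = (∑a_k²)/√D > (1+|ν_φ|)/√(1+ν_φ²)` and the elongation
`ϱ = 1 + 2/(γ−1) < (1+|ν_φ|+√(1+ν_φ²))/(1+|ν_φ|−√(1+ν_φ²))`. -/
theorem elongation_bound (a₁ a₂ a₃ a₄ φ : ℝ)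
    (h₁ : 0 < a₁) (h₂ : 0 < a₂) (h₃ : 0 < a₃) (h₄ : 0 < a₄)
    (hne : a₂ ≠ a₄ ∨ a₁ ≠ a₃)
    (hφ : φ ∈ Set.Ioo 0 π) (hφ₁ : φ ≠ π/4) (hφ₂ : φ ≠ π/2) (hφ₃ : φ ≠ 3*π/4)
    (ν : ℝ) (hν : ν = (1/2) * (Real.tan φ - 1/Real.tan φ) * Real.sign (π/2 - φ))
    (horient : a₁^2 - a₃^2 = ν * (a₄^2 - a₂^2)) :
    let D : ℝ := (a₃^2 - a₁^2)^2 + (a₂^2 - a₄^2)^2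
    let γ : ℝ := (a₁^2 + a₂^2 + a₃^2 + a₄^2) / Real.sqrt D
    (1 + |ν|) / Real.sqrt (1 + ν^2) < γ ∧
    1 + 2/(γ - 1) < (1 + |ν| + Real.sqrt (1 + ν^2)) / (1 + |ν| - Real.sqrt (1 + ν^2)) := by
  intro D γ
  obtain ⟨hφ0, hφπ⟩ := hφ
  have hπ := Real.pi_pos
  -- ν ≠ 0
  have hν0 : ν ≠ 0 := by
    rcases lt_or_gt_of_ne hφ₂ with hlt | hgt
    · -- φ ∈ (0, π/2)
      have ht : 0 < Real.tan φ := Real.tan_pos_of_pos_of_lt_pi_div_two hφ0 hlt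
      have htne : Real.tan φ ≠ 0 := ne_of_gt ht
      have ht1 : Real.tan φ ≠ 1 := by
        intro h
        apply hφ₁
        exact Real.injOn_tan (show φ ∈ Set.Ioo (-(π/2)) (π/2) from ⟨by linarith, hlt⟩)
          (show π/4 ∈ Set.Ioo (-(π/2)) (π/2) from ⟨by linarith, by linarith⟩)
          (h.trans Real.tan_pi_div_four.symm)
      have hsign : Real.sign (π/2 - φ) = 1 := Real.sign_of_pos (by linarith)
      rw [hν, hsign]
      intro h
      have h' : Real.tan φ - 1 / Real.tan φ = 0 := by linarith
      field_simp [htne] at h'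
      have h1 : (Real.tan φ - 1) * (Real.tan φ + 1) = 0 := by nlinarith
      rcases mul_eq_zero.mp h1 with h'' | h''
      · exact ht1 (by linarith)
      · linarith
    · -- φ ∈ (π/2, π)
      have hmem : φ - π ∈ Set.Ioo (-(π/2)) (π/2) := ⟨by linarith, by linarith⟩
      have htan : Real.tan (φ - π) = Real.tan φ := Real.tan_periodic.sub_eq φ
      have ht : Real.tan φ < 0 := by
        rw [← htan]
        exact Real.tan_neg_of_neg_of_pi_div_two_lt (by linarith) hmem.1
      have htne : Real.tan φ ≠ 0 := ne_of_lt ht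
      have ht1 : Real.tan φ ≠ -1 := by
        intro h
        apply hφ₃
        have hneg : Real.tan (-(π/4)) = -1 := by
          rw [Real.tan_neg, Real.tan_pi_div_four]
        have heq : φ - π = -(π/4) := Real.injOn_tan hmem
          (show -(π/4) ∈ Set.Ioo (-(π/2)) (π/2) from ⟨by linarith, by linarith⟩)
          (by rw [htan, h, ← hneg])
        linarith
      have hsign : Real.sign (π/2 - φ) = -1 := Real.sign_of_neg (by linarith)
      rw [hν, hsign]
      intro h
      have h' : Real.tan φ - 1 / Real.tan φ = 0 := by linarith
      field_simp [htne] at h'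
      have h1 : (Real.tan φ - 1) * (Real.tan φ + 1) = 0 := by nlinarith
      rcases mul_eq_zero.mp h1 with h'' | h''
      · linarith
      · exact ht1 (by linarith)
  -- y ≠ 0
  have hy : a₄^2 - a₂^2 ≠ 0 := by
    intro h
    have hx : a₁^2 - a₃^2 = 0 := by rw [horient, h, mul_zero]
    have h24 : (a₄ - a₂) * (a₄ + a₂) = 0 := by nlinarith
    have h13 : (a₁ - a₃) * (a₁ + a₃) = 0 := by nlinarith
    have e24 : a₂ = a₄ := by
      rcases mul_eq_zero.mp h24 with h' | h' <;> linarith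
    have e13 : a₁ = a₃ := by
      rcases mul_eq_zero.mp h13 with h' | h' <;> linarith
    rcases hne with h' | h' <;> [exact h' e24; exact h' e13]
  have hyabs : 0 < |a₄^2 - a₂^2| := abs_pos.mpr hy
  have hνabs : 0 < |ν| := abs_pos.mpr hν0
  have hs : 0 < Real.sqrt (1 + ν^2) := Real.sqrt_pos.mpr (by positivity)
  have hsq : Real.sqrt (1 + ν^2) ^ 2 = 1 + ν^2 := Real.sq_sqrt (by positivity)
  -- √D = √(1+ν²) * |y|
  have hD : D = (1 + ν^2) * (a₄^2 - a₂^2)^2 := by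
    show (a₃^2 - a₁^2)^2 + (a₂^2 - a₄^2)^2 = _
    have hx : a₃^2 - a₁^2 = -(ν * (a₄^2 - a₂^2)) := by linarith
    rw [hx]; ring
  have hsqrtD : Real.sqrt D = Real.sqrt (1 + ν^2) * |a₄^2 - a₂^2| := by
    rw [hD, Real.sqrt_mul (by positivity), Real.sqrt_sq_eq_abs]
  -- sum bound
  have hsum : (1 + |ν|) * |a₄^2 - a₂^2| < a₁^2 + a₂^2 + a₃^2 + a₄^2 := by
    have hxabs : |a₁^2 - a₃^2| = |ν| * |a₄^2 - a₂^2| := by rw [horient, abs_mul]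
    have h24 : |a₄^2 - a₂^2| < a₂^2 + a₄^2 := by
      rw [abs_lt]; constructor <;> nlinarith
    have h13 : |ν| * |a₄^2 - a₂^2| < a₁^2 + a₃^2 := by
      rw [← hxabs, abs_lt]; constructor <;> nlinarith
    nlinarith
  -- first inequality
  have hγdef : γ = (a₁^2 + a₂^2 + a₃^2 + a₄^2) / (Real.sqrt (1 + ν^2) * |a₄^2 - a₂^2|) := by
    show (a₁^2 + a₂^2 + a₃^2 + a₄^2) / Real.sqrt D = _
    rw [hsqrtD]
  have hL : (1 + |ν|) / Real.sqrt (1 + ν^2) < γ := by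
    rw [hγdef, div_lt_div_iff₀ hs (by positivity)]
    nlinarith
  refine ⟨hL, ?_⟩
  -- √(1+ν²) < 1 + |ν|
  have hs1 : Real.sqrt (1 + ν^2) < 1 + |ν| := by
    rw [Real.sqrt_lt' (by positivity)]
    nlinarith [sq_abs ν]
  have hL1 : 1 < (1 + |ν|) / Real.sqrt (1 + ν^2) := (one_lt_div hs).mpr hs1
  have hγ1 : 1 < γ := hL1.trans hL
  have hkey : 2 / (γ - 1) < 2 / ((1 + |ν|) / Real.sqrt (1 + ν^2) - 1) :=
    div_lt_div_of_pos_left two_pos (by linarith) (by linarith)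
  have heq : 1 + 2 / ((1 + |ν|) / Real.sqrt (1 + ν^2) - 1)
      = (1 + |ν| + Real.sqrt (1 + ν^2)) / (1 + |ν| - Real.sqrt (1 + ν^2)) := by
    have hms : 1 + |ν| - Real.sqrt (1 + ν^2) ≠ 0 := by linarith
    rw [div_sub_one (ne_of_gt hs), div_div_eq_mul_div, eq_div_iff hms]
    field_simp
    ring
  rw [← heq]
  linarith
end

section
/- The kurtosis matrix of the four-directional box spline β⁴_a equals K_a = (μ₄ − 3μ₂²)[[a₁⁴ + (a₂⁴+a₄⁴)/2, (a₂⁴−a₄⁴)/2],[(a₂⁴−a₄⁴)/2, a₃⁴ + (a₂⁴+a₄⁴)/2]], where μ₂ = 1/12 and μ₄ = 1/80 are the second and fourth moments of the unit box β₁; consequently ‖K_a‖_F² = (μ₄−3μ₂²)² (∑_{k=1}^4 a_k⁸ + (a₁⁴+a₃⁴)(a₂⁴+a₄⁴)). -/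
/-!
The matrix `K = L − tr(C)·C − 2C²` is the contraction `K_ij = ∑ₖ κ_kkij` of the fourth cumulant
tensor `κ_ijkl = m_ijkl − m_ij m_kl − m_ik m_jl − m_il m_jk`, so it is additive under convolution of
centered probability measures: expanding `(x + y)₁ᵖ (x + y)₂^q` binomially, every term carrying a
single first moment vanishes, and the cross terms `m₂(μ) m₂(ν)` of `L` cancel against those of
`tr(C)·C + 2C²`. A directional box `φ_{a,θ}` is the image of `β_a` on the line `ℝ u_θ`, so its
kurtosis matrix is `(μ₄ a⁴ − 3 (μ₂ a²)²) u_θ u_θᵀ` (using `|u_θ| = 1`). Summing the four rank-one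
terms for `θ = 0, π/4, π/2, 3π/4` gives `K_a`, and `‖K_a‖_F²` is then a direct computation.
-/

open MeasureTheory Real

/-- The 1-D box function: `β_a(x) = 1/a` for `-a/2 < x ≤ a/2`, and `0` otherwise. -/
noncomputable def boxFun (a x : ℝ) : ℝ := if -a/2 < x ∧ x ≤ a/2 then 1/a else 0

/-- The directional box distribution `φ_{a,θ}`, realized as the pushforward of the
1-D box density `β_a` under the embedding `t ↦ t·u_θ = (t cos θ, t sin θ)` of `ℝ` into `ℝ²`. -/
noncomputable def dirBoxMeasure (a θ : ℝ) : Measure (ℝ × ℝ) :=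
  Measure.map (fun t : ℝ => (t * Real.cos θ, t * Real.sin θ))
    (volume.withDensity fun t => ENNReal.ofReal (boxFun a t))

/-- The radially-uniform box spline measure of directional order `N`:
the convolution `φ_{a₀,θ₀} ∗ ⋯ ∗ φ_{a_{N-1},θ_{N-1}}`. -/
noncomputable def boxSplineMeasure (a θ : ℕ → ℝ) : ℕ → Measure (ℝ × ℝ)
  | 0 => Measure.dirac 0
  | n + 1 => Measure.conv (boxSplineMeasure a θ n) (dirBoxMeasure (a n) (θ n))

open Matrix


noncomputable def mixedMoment (μ : Measure (ℝ × ℝ)) (p q : ℕ) : ℝ :=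
  ∫ x, x.1 ^ p * x.2 ^ q ∂μ

def HasMixedMoments (μ : Measure (ℝ × ℝ)) : Prop :=
  ∀ p q : ℕ, Integrable (fun x : ℝ × ℝ => x.1 ^ p * x.2 ^ q) μ

lemma add_fst_pow_mul_add_snd_pow (x y : ℝ × ℝ) (p q : ℕ) :
    (x.1 + y.1) ^ p * (x.2 + y.2) ^ q =
      ∑ i ∈ Finset.range (p + 1), ∑ j ∈ Finset.range (q + 1),
        (p.choose i * q.choose j * (x.1 ^ i * x.2 ^ j)) * (y.1 ^ (p - i) * y.2 ^ (q - j)) := by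
  rw [add_pow, add_pow, Finset.sum_mul_sum]
  refine Finset.sum_congr rfl fun i _ => Finset.sum_congr rfl fun j _ => ?_
  ring

section Conv

variable {μ ν : Measure (ℝ × ℝ)}

lemma integrable_monomial_mul_monomial_prod (hμ : HasMixedMoments μ) (hν : HasMixedMoments ν)
    (c : ℝ) (i j k l : ℕ) :
    Integrable (fun z : (ℝ × ℝ) × (ℝ × ℝ) =>
      (c * (z.1.1 ^ i * z.1.2 ^ j)) * (z.2.1 ^ k * z.2.2 ^ l)) (μ.prod ν) :=
  ((hμ i j).const_mul c).mul_prod (hν k l)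

lemma integral_conv_monomial [SFinite μ] [SFinite ν] (p q : ℕ) :
    ∫ z, z.1 ^ p * z.2 ^ q ∂(μ ∗ ν) =
      ∫ z, (z.1.1 + z.2.1) ^ p * (z.1.2 + z.2.2) ^ q ∂(μ.prod ν) := by
  rw [Measure.conv, integral_map (by fun_prop) (by fun_prop)]
  rfl

theorem HasMixedMoments.conv [SFinite μ] [SFinite ν] (hμ : HasMixedMoments μ)
    (hν : HasMixedMoments ν) : HasMixedMoments (μ ∗ ν) := by
  intro p q
  rw [Measure.conv, integrable_map_measure (by fun_prop) (by fun_prop)]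
  simp only [Function.comp_def, Prod.fst_add, Prod.snd_add, add_fst_pow_mul_add_snd_pow]
  exact integrable_finsetSum _ fun i _ => integrable_finsetSum _ fun j _ =>
    integrable_monomial_mul_monomial_prod hμ hν _ i j _ _

theorem mixedMoment_conv [SFinite μ] [SFinite ν] (hμ : HasMixedMoments μ)
    (hν : HasMixedMoments ν) (p q : ℕ) :
    mixedMoment (μ ∗ ν) p q =
      ∑ i ∈ Finset.range (p + 1), ∑ j ∈ Finset.range (q + 1),
        p.choose i * q.choose j * mixedMoment μ i j * mixedMoment ν (p - i) (q - j) := by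
  rw [mixedMoment, integral_conv_monomial]
  simp only [add_fst_pow_mul_add_snd_pow]
  rw [integral_finsetSum _ fun i _ => integrable_finsetSum _ fun j _ =>
    integrable_monomial_mul_monomial_prod hμ hν _ i j _ _]
  refine Finset.sum_congr rfl fun i _ => ?_
  rw [integral_finsetSum _ fun j _ => integrable_monomial_mul_monomial_prod hμ hν _ i j _ _]
  refine Finset.sum_congr rfl fun j _ => ?_
  rw [integral_prod_mul (fun x : ℝ × ℝ => (p.choose i * q.choose j : ℝ) * (x.1 ^ i * x.2 ^ j))
    (fun y : ℝ × ℝ => y.1 ^ (p - i) * y.2 ^ (q - j)), integral_const_mul, mixedMoment,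
    mixedMoment, mul_assoc]

end Conv

lemma mixedMoment_zero_zero (μ : Measure (ℝ × ℝ)) [IsProbabilityMeasure μ] :
    mixedMoment μ 0 0 = 1 := by
  simp [mixedMoment]

structure IsCenteredWithMoments (μ : Measure (ℝ × ℝ)) : Prop where
  isProbabilityMeasure : IsProbabilityMeasure μ
  hasMixedMoments : HasMixedMoments μ
  mixedMoment_one_zero : mixedMoment μ 1 0 = 0
  mixedMoment_zero_one : mixedMoment μ 0 1 = 0

theorem IsCenteredWithMoments.conv {μ ν : Measure (ℝ × ℝ)} (hμ : IsCenteredWithMoments μ)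
    (hν : IsCenteredWithMoments ν) : IsCenteredWithMoments (μ ∗ ν) := by
  have := hμ.isProbabilityMeasure
  have := hν.isProbabilityMeasure
  refine ⟨inferInstance, hμ.hasMixedMoments.conv hν.hasMixedMoments, ?_, ?_⟩ <;>
  · simp [mixedMoment_conv hμ.hasMixedMoments hν.hasMixedMoments, Finset.sum_range_succ,
      mixedMoment_zero_zero, hμ.mixedMoment_one_zero, hμ.mixedMoment_zero_one,
      hν.mixedMoment_one_zero, hν.mixedMoment_zero_one]

theorem isCenteredWithMoments_dirac_zero : IsCenteredWithMoments (Measure.dirac 0) :=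
  ⟨inferInstance, fun _ _ => integrable_dirac enorm_lt_top, by simp [mixedMoment],
    by simp [mixedMoment]⟩

noncomputable def secondMomentMatrix (μ : Measure (ℝ × ℝ)) : Matrix (Fin 2) (Fin 2) ℝ :=
  !![∫ x : ℝ × ℝ, x.1 * x.1 ∂μ, ∫ x : ℝ × ℝ, x.1 * x.2 ∂μ;
     ∫ x : ℝ × ℝ, x.2 * x.1 ∂μ, ∫ x : ℝ × ℝ, x.2 * x.2 ∂μ]

noncomputable def fourthMomentMatrix (μ : Measure (ℝ × ℝ)) : Matrix (Fin 2) (Fin 2) ℝ :=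
  !![∫ x : ℝ × ℝ, (x.1^2 + x.2^2) * (x.1 * x.1) ∂μ,
     ∫ x : ℝ × ℝ, (x.1^2 + x.2^2) * (x.1 * x.2) ∂μ;
     ∫ x : ℝ × ℝ, (x.1^2 + x.2^2) * (x.2 * x.1) ∂μ,
     ∫ x : ℝ × ℝ, (x.1^2 + x.2^2) * (x.2 * x.2) ∂μ]

noncomputable def kurtosisMatrix (μ : Measure (ℝ × ℝ)) : Matrix (Fin 2) (Fin 2) ℝ :=
  fourthMomentMatrix μ - (secondMomentMatrix μ).trace • secondMomentMatrix μ -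
    2 • (secondMomentMatrix μ * secondMomentMatrix μ)

lemma secondMomentMatrix_eq (μ : Measure (ℝ × ℝ)) :
    secondMomentMatrix μ =
      !![mixedMoment μ 2 0, mixedMoment μ 1 1; mixedMoment μ 1 1, mixedMoment μ 0 2] := by
  ext i j
  fin_cases i <;> fin_cases j <;>
  · simp only [secondMomentMatrix, mixedMoment]
    exact integral_congr_ae (ae_of_all _ fun x => by ring)

lemma integral_eq_mixedMoment_add {μ : Measure (ℝ × ℝ)} (h : HasMixedMoments μ)
    {f : ℝ × ℝ → ℝ} {p q r s : ℕ} (hf : ∀ x, f x = x.1 ^ p * x.2 ^ q + x.1 ^ r * x.2 ^ s) :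
    ∫ x, f x ∂μ = mixedMoment μ p q + mixedMoment μ r s := by
  simp_rw [hf]
  exact integral_add (h p q) (h r s)

lemma fourthMomentMatrix_eq {μ : Measure (ℝ × ℝ)} (h : HasMixedMoments μ) :
    fourthMomentMatrix μ =
      !![mixedMoment μ 4 0 + mixedMoment μ 2 2, mixedMoment μ 3 1 + mixedMoment μ 1 3;
         mixedMoment μ 3 1 + mixedMoment μ 1 3, mixedMoment μ 2 2 + mixedMoment μ 0 4] := by
  ext i j
  fin_cases i <;> fin_cases j <;>
  · simp only [fourthMomentMatrix]
    exact integral_eq_mixedMoment_add h fun x => by ring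

theorem kurtosisMatrix_conv {μ ν : Measure (ℝ × ℝ)} (hμ : IsCenteredWithMoments μ)
    (hν : IsCenteredWithMoments ν) :
    kurtosisMatrix (μ ∗ ν) = kurtosisMatrix μ + kurtosisMatrix ν := by
  have := hμ.isProbabilityMeasure
  have := hν.isProbabilityMeasure
  simp only [kurtosisMatrix, secondMomentMatrix_eq, fourthMomentMatrix_eq hμ.hasMixedMoments,
    fourthMomentMatrix_eq hν.hasMixedMoments,
    fourthMomentMatrix_eq (hμ.hasMixedMoments.conv hν.hasMixedMoments),
    mixedMoment_conv hμ.hasMixedMoments hν.hasMixedMoments]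
  ext i j
  fin_cases i <;> fin_cases j <;>
  · simp [Finset.sum_range_succ, Nat.choose, Matrix.trace_fin_two, mixedMoment_zero_zero,
      hμ.mixedMoment_one_zero, hμ.mixedMoment_zero_one, hν.mixedMoment_one_zero,
      hν.mixedMoment_zero_one]
    ring

noncomputable def boxMeasure (a : ℝ) : Measure ℝ :=
  volume.withDensity fun t => ENNReal.ofReal (boxFun a t)

lemma boxMeasure_eq_smul_restrict (a : ℝ) :
    boxMeasure a = ENNReal.ofReal (1 / a) • volume.restrict (Set.Ioc (-a/2) (a/2)) := by
  have h : (fun t => ENNReal.ofReal (boxFun a t))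
      = (Set.Ioc (-a/2) (a/2)).indicator fun _ => ENNReal.ofReal (1 / a) := by
    funext t
    rw [boxFun, apply_ite ENNReal.ofReal, ENNReal.ofReal_zero]
    simp only [Set.indicator_apply, Set.mem_Ioc]
  rw [boxMeasure, h, withDensity_indicator measurableSet_Ioc, withDensity_const]

lemma isProbabilityMeasure_boxMeasure {a : ℝ} (ha : 0 < a) :
    IsProbabilityMeasure (boxMeasure a) := by
  constructor
  rw [boxMeasure_eq_smul_restrict, Measure.smul_apply, Measure.restrict_apply_univ,
    Real.volume_Ioc, smul_eq_mul, ← ENNReal.ofReal_mul (by positivity)]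
  field_simp
  norm_num

lemma integrable_pow_boxMeasure (a : ℝ) (n : ℕ) : Integrable (fun t => t ^ n) (boxMeasure a) := by
  have h : IntegrableOn (fun t : ℝ => t ^ n) (Set.Ioc (-a/2) (a/2)) :=
    (continuous_pow n).integrableOn_Icc.mono_set Set.Ioc_subset_Icc_self
  rw [boxMeasure_eq_smul_restrict]
  exact h.smul_measure ENNReal.ofReal_ne_top

lemma integral_pow_boxMeasure {a : ℝ} (ha : 0 < a) (n : ℕ) :
    ∫ t, t ^ n ∂boxMeasure a = ((a/2) ^ (n + 1) - (-a/2) ^ (n + 1)) / ((n + 1) * a) := by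
  rw [boxMeasure_eq_smul_restrict, integral_smul_measure, ENNReal.toReal_ofReal (by positivity),
    ← intervalIntegral.integral_of_le (by linarith), integral_pow, smul_eq_mul]
  field_simp

lemma integral_sq_boxMeasure {a : ℝ} (ha : 0 < a) : ∫ t, t ^ 2 ∂boxMeasure a = a ^ 2 / 12 := by
  rw [integral_pow_boxMeasure ha]
  field_simp
  ring

lemma integral_pow_four_boxMeasure {a : ℝ} (ha : 0 < a) :
    ∫ t, t ^ 4 ∂boxMeasure a = a ^ 4 / 80 := by
  rw [integral_pow_boxMeasure ha]
  field_simp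
  ring

lemma dirBoxMeasure_eq_map (a θ : ℝ) :
    dirBoxMeasure a θ = (boxMeasure a).map fun t => (t * cos θ, t * sin θ) := rfl

lemma mul_cos_pow_mul_mul_sin_pow (θ t : ℝ) (p q : ℕ) :
    (t * cos θ) ^ p * (t * sin θ) ^ q = cos θ ^ p * sin θ ^ q * t ^ (p + q) := by
  ring

lemma hasMixedMoments_dirBoxMeasure (a θ : ℝ) : HasMixedMoments (dirBoxMeasure a θ) := by
  intro p q
  rw [dirBoxMeasure_eq_map, integrable_map_measure (by fun_prop) (by fun_prop)]
  simpa only [Function.comp_def, mul_cos_pow_mul_mul_sin_pow] using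
    (integrable_pow_boxMeasure a (p + q)).const_mul (cos θ ^ p * sin θ ^ q)

lemma mixedMoment_dirBoxMeasure (a θ : ℝ) (p q : ℕ) :
    mixedMoment (dirBoxMeasure a θ) p q =
      cos θ ^ p * sin θ ^ q * ∫ t, t ^ (p + q) ∂boxMeasure a := by
  rw [mixedMoment, dirBoxMeasure_eq_map, integral_map (by fun_prop) (by fun_prop)]
  simp only [mul_cos_pow_mul_mul_sin_pow, integral_const_mul]

lemma isProbabilityMeasure_dirBoxMeasure {a : ℝ} (ha : 0 < a) (θ : ℝ) :
    IsProbabilityMeasure (dirBoxMeasure a θ) := by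
  have := isProbabilityMeasure_boxMeasure ha
  rw [dirBoxMeasure_eq_map]
  exact Measure.isProbabilityMeasure_map (by fun_prop)

theorem isCenteredWithMoments_dirBoxMeasure {a : ℝ} (ha : 0 < a) (θ : ℝ) :
    IsCenteredWithMoments (dirBoxMeasure a θ) := by
  refine ⟨isProbabilityMeasure_dirBoxMeasure ha θ, hasMixedMoments_dirBoxMeasure a θ, ?_, ?_⟩ <;>
  · rw [mixedMoment_dirBoxMeasure, integral_pow_boxMeasure ha]
    ring

theorem kurtosisMatrix_dirBoxMeasure {a : ℝ} (ha : 0 < a) (θ : ℝ) :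
    kurtosisMatrix (dirBoxMeasure a θ) =
      (a ^ 4 / 80 - 3 * (a ^ 2 / 12) ^ 2) • vecMulVec ![cos θ, sin θ] ![cos θ, sin θ] := by
  have hθ := cos_sq_add_sin_sq θ
  simp only [kurtosisMatrix, secondMomentMatrix_eq,
    fourthMomentMatrix_eq (hasMixedMoments_dirBoxMeasure a θ), mixedMoment_dirBoxMeasure,
    integral_sq_boxMeasure ha, integral_pow_four_boxMeasure ha]
  ext i j
  fin_cases i <;> fin_cases j <;> simp [Matrix.trace_fin_two, vecMulVec]
  · linear_combination (a ^ 4 / 80 - 3 * (a ^ 2 / 12) ^ 2) * cos θ ^ 2 * hθ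
  · linear_combination (a ^ 4 / 80 - 3 * (a ^ 2 / 12) ^ 2) * cos θ * sin θ * hθ
  · linear_combination (a ^ 4 / 80 - 3 * (a ^ 2 / 12) ^ 2) * cos θ * sin θ * hθ
  · linear_combination (a ^ 4 / 80 - 3 * (a ^ 2 / 12) ^ 2) * sin θ ^ 2 * hθ

lemma kurtosisMatrix_dirac_zero : kurtosisMatrix (Measure.dirac 0) = 0 := by
  ext i j
  fin_cases i <;> fin_cases j <;> simp [kurtosisMatrix, secondMomentMatrix, fourthMomentMatrix]

theorem isCenteredWithMoments_boxSplineMeasure {a : ℕ → ℝ} (θ : ℕ → ℝ) {n : ℕ}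
    (ha : ∀ k < n, 0 < a k) : IsCenteredWithMoments (boxSplineMeasure a θ n) := by
  induction n with
  | zero => exact isCenteredWithMoments_dirac_zero
  | succ n ih =>
    exact (ih fun k hk => ha k (by omega)).conv
      (isCenteredWithMoments_dirBoxMeasure (ha n n.lt_succ_self) _)

theorem kurtosisMatrix_boxSplineMeasure {a : ℕ → ℝ} (θ : ℕ → ℝ) {n : ℕ}
    (ha : ∀ k < n, 0 < a k) :
    kurtosisMatrix (boxSplineMeasure a θ n) =
      ∑ k ∈ Finset.range n, (a k ^ 4 / 80 - 3 * (a k ^ 2 / 12) ^ 2) •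
        vecMulVec ![cos (θ k), sin (θ k)] ![cos (θ k), sin (θ k)] := by
  induction n with
  | zero => exact kurtosisMatrix_dirac_zero
  | succ n ih =>
    have ha' : ∀ k < n, 0 < a k := fun k hk => ha k (by omega)
    rw [boxSplineMeasure, kurtosisMatrix_conv (isCenteredWithMoments_boxSplineMeasure θ ha')
      (isCenteredWithMoments_dirBoxMeasure (ha n n.lt_succ_self) _), ih ha',
      kurtosisMatrix_dirBoxMeasure (ha n n.lt_succ_self), Finset.sum_range_succ]

lemma vecMulVec_cos_sin (θ : ℝ) :
    vecMulVec ![cos θ, sin θ] ![cos θ, sin θ] =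
      !![cos θ ^ 2, cos θ * sin θ; cos θ * sin θ, sin θ ^ 2] := by
  ext i j
  fin_cases i <;> fin_cases j <;> simp [vecMulVec, sq, mul_comm]

lemma sum_vecMulVec_fourDirections (w : ℕ → ℝ) :
    ∑ k ∈ Finset.range 4, w k •
        vecMulVec ![cos (k * π / 4), sin (k * π / 4)] ![cos (k * π / 4), sin (k * π / 4)] =
      !![w 0 + (w 1 + w 3) / 2, (w 1 - w 3) / 2; (w 1 - w 3) / 2, w 2 + (w 1 + w 3) / 2] := by
  have hc2 : cos (2 * π / 4) = 0 := by rw [show 2 * π / 4 = π / 2 by ring, cos_pi_div_two]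
  have hs2 : sin (2 * π / 4) = 1 := by rw [show 2 * π / 4 = π / 2 by ring, sin_pi_div_two]
  have hc3 : cos (3 * π / 4) = -(√2 / 2) := by
    rw [show 3 * π / 4 = π - π / 4 by ring, cos_pi_sub, cos_pi_div_four]
  have hs3 : sin (3 * π / 4) = √2 / 2 := by
    rw [show 3 * π / 4 = π - π / 4 by ring, sin_pi_sub, sin_pi_div_four]
  simp only [Finset.sum_range_succ, Finset.sum_range_zero, vecMulVec_cos_sin]
  ext i j
  fin_cases i <;> fin_cases j <;>
  · simp [hc2, hs2, hc3, hs3, div_pow, div_mul_div_comm]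
    ring

/-- The kurtosis matrix of the four-directional box spline `β⁴_a` (directions
`0, π/4, π/2, 3π/4`) equals
`K_a = (μ₄ − 3μ₂²)[[a₁⁴+(a₂⁴+a₄⁴)/2, (a₂⁴−a₄⁴)/2],[(a₂⁴−a₄⁴)/2, a₃⁴+(a₂⁴+a₄⁴)/2]]`
with `μ₂ = 1/12`, `μ₄ = 1/80`; consequently
`‖K_a‖_F² = (μ₄−3μ₂²)²(∑a_k⁸ + (a₁⁴+a₃⁴)(a₂⁴+a₄⁴))`. -/
theorem kurtosis_fourDirectional (a₁ a₂ a₃ a₄ : ℝ)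
    (h₁ : 0 < a₁) (h₂ : 0 < a₂) (h₃ : 0 < a₃) (h₄ : 0 < a₄) :
    let a : ℕ → ℝ := fun k => if k = 0 then a₁ else if k = 1 then a₂ else if k = 2 then a₃ else a₄
    let μ := boxSplineMeasure a (fun k => k * π / 4) 4
    let C : Matrix (Fin 2) (Fin 2) ℝ :=
      !![∫ x : ℝ × ℝ, x.1 * x.1 ∂μ, ∫ x : ℝ × ℝ, x.1 * x.2 ∂μ;
         ∫ x : ℝ × ℝ, x.2 * x.1 ∂μ, ∫ x : ℝ × ℝ, x.2 * x.2 ∂μ]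
    let L : Matrix (Fin 2) (Fin 2) ℝ :=
      !![∫ x : ℝ × ℝ, (x.1^2 + x.2^2) * (x.1 * x.1) ∂μ,
         ∫ x : ℝ × ℝ, (x.1^2 + x.2^2) * (x.1 * x.2) ∂μ;
         ∫ x : ℝ × ℝ, (x.1^2 + x.2^2) * (x.2 * x.1) ∂μ,
         ∫ x : ℝ × ℝ, (x.1^2 + x.2^2) * (x.2 * x.2) ∂μ]
    let K : Matrix (Fin 2) (Fin 2) ℝ := L - C.trace • C - 2 • (C * C)
    let μ₂ : ℝ := 1/12
    let μ₄ : ℝ := 1/80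
    K = (μ₄ - 3 * μ₂^2) •
        !![a₁^4 + (a₂^4 + a₄^4)/2, (a₂^4 - a₄^4)/2;
           (a₂^4 - a₄^4)/2, a₃^4 + (a₂^4 + a₄^4)/2] ∧
    (Kᵀ * K).trace
      = (μ₄ - 3 * μ₂^2)^2 *
          ((a₁^8 + a₂^8 + a₃^8 + a₄^8) + (a₁^4 + a₃^4) * (a₂^4 + a₄^4)) := by
  intro a μ C L K μ₂ μ₄
  have ha : ∀ k < 4, 0 < a k := by
    intro k hk
    interval_cases k <;> simp [a, *]
  have hK : K = (μ₄ - 3 * μ₂^2) • !![a₁^4 + (a₂^4 + a₄^4)/2, (a₂^4 - a₄^4)/2;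
      (a₂^4 - a₄^4)/2, a₃^4 + (a₂^4 + a₄^4)/2] := by
    change kurtosisMatrix μ = _
    rw [kurtosisMatrix_boxSplineMeasure _ ha, sum_vecMulVec_fourDirections]
    ext i j
    fin_cases i <;> fin_cases j <;>
    · simp [a, μ₂, μ₄]
      ring
  refine ⟨hK, ?_⟩
  rw [hK]
  simp [Matrix.trace_fin_two, Matrix.mul_apply, Fin.sum_univ_two]
  ring
end
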